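/- Bounding Lemma: let ‖·‖ be a reparametrization invariant norm on AS¹(ℝ). Then for every φ ∈ AS¹(ℝ) the inequalities (lim_{t→+∞} |φ(t)|) · ‖S‖ ≤ ‖φ‖ ≤ V_φ · ‖S‖ hold. -/

import Mathlib

open MeasureTheory Set

noncomputable section

/-- The function `S` of the paper. -/
def Sfun (t : ℝ) : ℝ :=
  if t ≤ -1 then 0
  else if t ≤ 0 then (t + 1) ^ 2 / 2
  else if t ≤ 1 then 1 - (t - 1) ^ 2 / 2
  else 1

/-- The function `Λ` of the paper. -/
def Lam (t : ℝ) : ℝ := Sfun (t + 1) - Sfun (t - 1)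

/-- Almost sigmoidal functions of class `C¹`. -/
def AS1 (φ : ℝ → ℝ) : Prop :=
  ContDiff ℝ 1 φ ∧
    ∃ a b : ℝ, a ≤ b ∧ (∀ t ≤ a, φ t = 0) ∧ ∀ t, b ≤ t → φ t = φ b

/-- Orientation-preserving `C¹`-diffeomorphisms of `ℝ`. -/
def OPDiffeo (h : ℝ → ℝ) : Prop :=
  ContDiff ℝ 1 h ∧ Function.Bijective h ∧
    (∃ g : ℝ → ℝ, ContDiff ℝ 1 g ∧ Function.LeftInverse g h ∧ Function.RightInverse g h) ∧
    ∀ t, 0 < deriv h t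

/-- Total variation `V_φ = ∫ |φ'|`. -/
def totalVar (φ : ℝ → ℝ) : ℝ := ∫ t, |deriv φ t|

/-- A reparametrization invariant norm on `AS¹(ℝ)`. -/
structure IsRPINorm (N : (ℝ → ℝ) → ℝ) : Prop where
  nonneg : ∀ φ, AS1 φ → 0 ≤ N φ
  eq_zero_iff : ∀ φ, AS1 φ → (N φ = 0 ↔ ∀ t, φ t = 0)
  smul : ∀ (c : ℝ) (φ : ℝ → ℝ), AS1 φ → N (fun t => c * φ t) = |c| * N φ
  triangle : ∀ φ ψ : ℝ → ℝ, AS1 φ → AS1 ψ → N (fun t => φ t + ψ t) ≤ N φ + N ψ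
  invariant : ∀ (φ h : ℝ → ℝ), AS1 φ → OPDiffeo h → N (φ ∘ h) = N φ

/-- The standard RPI-norm `‖φ‖_[ψ]`. -/
def stdNorm (ψ φ : ℝ → ℝ) : ℝ :=
  ⨆ h : {h : ℝ → ℝ // OPDiffeo h}, |∫ t, φ (-t) * deriv (ψ ∘ h.1) t|

/-- The function `S_n`. -/
def Sn (n : ℕ) : ℝ → ℝ := fun t => ∑ i ∈ Finset.range n, (-1 : ℝ) ^ i * Sfun (t - 2 * (i : ℝ))

/-- The function `L_n`. -/
def Lfun (n : ℕ) : ℝ → ℝ := fun t => ∑ i ∈ Finset.range n, (-1 : ℝ) ^ i * Lam (t - 4 * (i : ℝ))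

/-- `W` is a separating set for `f`: `f` is monotone on each connected component of `ℝ \ W`. -/
def IsSepSet (f : ℝ → ℝ) (W : Finset ℝ) : Prop :=
  ∀ t, t ∉ (W : Set ℝ) →
    MonotoneOn f (connectedComponentIn ((W : Set ℝ)ᶜ) t) ∨
      AntitoneOn f (connectedComponentIn ((W : Set ℝ)ᶜ) t)

/-- `f` is piecewise monotone. -/
def PiecewiseMonotone (f : ℝ → ℝ) : Prop := ∃ W : Finset ℝ, IsSepSet f W

/-- `l(f)`: the minimum cardinality of a separating set for `f`. -/
def lval (f : ℝ → ℝ) : ℕ := sInf {n : ℕ | ∃ W : Finset ℝ, W.card = n ∧ IsSepSet f W}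


/-!
For a nondecreasing `ψ ∈ AS¹(ℝ)` with final value `c` and any `δ > 0`, the function
`ψ + δ S(·/r)` (with `r` large) increases strictly on `[-r, r]` and near `±r` is an affine
reparametrization of `(c + δ) S`, so it equals `(c + δ) S ∘ h` for an orientation-preserving
diffeomorphism `h`. Invariance and the triangle inequality give
`c ‖S‖ ≤ ‖ψ‖ ≤ (c + 2δ) ‖S‖`, hence `‖ψ‖ = c ‖S‖`. A general `φ` is the difference
`P - Q` of the primitives of `(φ')⁺` and `(φ')⁻`, which are nondecreasing with final values
adding up to `V_φ` and differing by `lim φ`; both bounds follow from the triangle inequality.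
-/

open Filter Topology Function

lemma hasDerivAt_max_zero_sq (x : ℝ) : HasDerivAt (fun y => max y 0 ^ 2) (2 * max x 0) x := by
  have hsq (z : ℝ) : HasDerivAt (fun y : ℝ => y ^ 2) (2 * z) z := by
    simpa using hasDerivAt_pow 2 z
  rcases lt_trichotomy x 0 with hx | rfl | hx
  · have he : (fun y => max y 0 ^ 2) =ᶠ[𝓝 x] fun _ => (0 : ℝ) :=
      eventuallyEq_of_mem (Iio_mem_nhds hx) fun y (hy : y < 0) => by simp [max_eq_right hy.le]
    simpa [max_eq_right hx.le] using (hasDerivAt_const x (0 : ℝ)).congr_of_eventuallyEq he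
  · have hl : HasDerivWithinAt (fun y : ℝ => max y 0 ^ 2) 0 (Iic 0) 0 :=
      (hasDerivWithinAt_const (0 : ℝ) _ (0 : ℝ)).congr
        (fun y (hy : y ∈ Iic 0) => by simp [max_eq_right (mem_Iic.1 hy)]) (by simp)
    have hr : HasDerivWithinAt (fun y : ℝ => max y 0 ^ 2) 0 (Ici 0) 0 :=
      ((hsq 0).hasDerivWithinAt.congr
        (fun y (hy : y ∈ Ici 0) => by simp [max_eq_left (mem_Ici.1 hy)]) (by simp)).congr_deriv
        (mul_zero 2)
    simpa [Iic_union_Ici] using hl.union hr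
  · have he : (fun y => max y 0 ^ 2) =ᶠ[𝓝 x] fun y => y ^ 2 :=
      eventuallyEq_of_mem (Ioi_mem_nhds hx) fun y (hy : 0 < y) => by simp [max_eq_left hy.le]
    simpa [max_eq_left hx.le] using (hsq x).congr_of_eventuallyEq he

lemma Sfun_eq_spline (t : ℝ) :
    Sfun t = (max (t + 1) 0 ^ 2 - 2 * max t 0 ^ 2 + max (t - 1) 0 ^ 2) / 2 := by
  unfold Sfun
  simp only [max_def]
  split_ifs <;> nlinarith

lemma Sfun_of_le_neg_one {t : ℝ} (ht : t ≤ -1) : Sfun t = 0 := if_pos ht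

lemma Sfun_of_one_le {t : ℝ} (ht : 1 ≤ t) : Sfun t = 1 := by
  rw [Sfun_eq_spline, max_eq_left (by linarith), max_eq_left (by linarith),
    max_eq_left (by linarith)]
  ring

lemma Sfun_of_neg_one_le_of_nonpos {t : ℝ} (h1 : -1 ≤ t) (h2 : t ≤ 0) :
    Sfun t = (t + 1) ^ 2 / 2 := by
  rw [Sfun_eq_spline, max_eq_left (by linarith), max_eq_right h2, max_eq_right (by linarith)]
  ring

lemma Sfun_of_nonneg_of_le_one {t : ℝ} (h1 : 0 ≤ t) (h2 : t ≤ 1) :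
    Sfun t = 1 - (t - 1) ^ 2 / 2 := by
  rw [Sfun_eq_spline, max_eq_left (by linarith), max_eq_left h1, max_eq_right (by linarith)]
  ring

lemma hasDerivAt_Sfun (t : ℝ) : HasDerivAt Sfun (max (1 - |t|) 0) t := by
  have h : HasDerivAt (fun x => (max (x + 1) 0 ^ 2 - 2 * max x 0 ^ 2 + max (x - 1) 0 ^ 2) / 2)
      ((2 * max (t + 1) 0 - 2 * (2 * max t 0) + 2 * max (t - 1) 0) / 2) t :=
    ((((hasDerivAt_max_zero_sq (t + 1)).comp_add_const t 1).sub
      ((hasDerivAt_max_zero_sq t).const_mul 2)).add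
      ((hasDerivAt_max_zero_sq (t - 1)).comp_sub_const t 1)).div_const 2
  rw [show Sfun = _ from funext Sfun_eq_spline]
  convert h using 1
  simp only [abs_eq_max_neg, max_def]
  split_ifs <;> linarith

lemma deriv_Sfun : deriv Sfun = fun t => max (1 - |t|) 0 :=
  funext fun t => (hasDerivAt_Sfun t).deriv

lemma contDiff_Sfun : ContDiff ℝ 1 Sfun :=
  contDiff_one_iff_deriv.2
    ⟨fun t => (hasDerivAt_Sfun t).differentiableAt, deriv_Sfun ▸ by fun_prop⟩

lemma Sfun_scale_left {k u : ℝ} (hk0 : 0 ≤ k) (hk1 : k ≤ 1) (hu : u ≤ 0) :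
    Sfun (k * (u + 1) - 1) = k ^ 2 * Sfun u := by
  rcases le_total u (-1) with hu1 | hu1
  · rw [Sfun_of_le_neg_one hu1, Sfun_of_le_neg_one (by nlinarith), mul_zero]
  · rw [Sfun_of_neg_one_le_of_nonpos hu1 hu,
      Sfun_of_neg_one_le_of_nonpos (by nlinarith) (by nlinarith)]
    ring

lemma Sfun_scale_right {k u : ℝ} (hk0 : 0 ≤ k) (hk1 : k ≤ 1) (hu : 0 ≤ u) :
    Sfun (k * (u - 1) + 1) = 1 - k ^ 2 * (1 - Sfun u) := by
  rcases le_total 1 u with hu1 | hu1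
  · rw [Sfun_of_one_le hu1, Sfun_of_one_le (by nlinarith)]
    ring
  · rw [Sfun_of_nonneg_of_le_one hu hu1,
      Sfun_of_nonneg_of_le_one (by nlinarith) (by nlinarith)]
    ring

def Sinv (y : ℝ) : ℝ := if y ≤ 1 / 2 then √(2 * y) - 1 else 1 - √(2 * (1 - y))

lemma Sinv_of_le {y : ℝ} (hy : y ≤ 1 / 2) : Sinv y = √(2 * y) - 1 := if_pos hy

lemma Sinv_of_ge {y : ℝ} (hy : 1 / 2 ≤ y) : Sinv y = 1 - √(2 * (1 - y)) := by
  rcases hy.eq_or_lt with rfl | hy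
  · rw [Sinv_of_le le_rfl]; norm_num
  · exact if_neg hy.not_ge

lemma continuous_Sinv : Continuous Sinv :=
  Continuous.if_le (by fun_prop) (by fun_prop) continuous_id continuous_const
    fun y hy => by rw [hy]; norm_num

lemma Sfun_Sinv {y : ℝ} (h0 : 0 ≤ y) (h1 : y ≤ 1) : Sfun (Sinv y) = y := by
  rcases le_total y (1 / 2) with hy | hy
  · have : √(2 * y) ≤ 1 := Real.sqrt_le_one.2 (by linarith)
    rw [Sinv_of_le hy,
      Sfun_of_neg_one_le_of_nonpos (by linarith [Real.sqrt_nonneg (2 * y)]) (by linarith),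
      sub_add_cancel, Real.sq_sqrt (by linarith)]
    ring
  · have : √(2 * (1 - y)) ≤ 1 := Real.sqrt_le_one.2 (by linarith)
    rw [Sinv_of_ge hy,
      Sfun_of_nonneg_of_le_one (by linarith) (by linarith [Real.sqrt_nonneg (2 * (1 - y))]),
      sub_sub_cancel_left, neg_sq, Real.sq_sqrt (by linarith)]
    ring

lemma Sinv_Sfun {t : ℝ} (h0 : -1 ≤ t) (h1 : t ≤ 1) : Sinv (Sfun t) = t := by
  rcases le_total t 0 with ht | ht
  · rw [Sfun_of_neg_one_le_of_nonpos h0 ht, Sinv_of_le (by nlinarith),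
      show 2 * ((t + 1) ^ 2 / 2) = (t + 1) ^ 2 by ring, Real.sqrt_sq (by linarith)]
    ring
  · rw [Sfun_of_nonneg_of_le_one ht h1, Sinv_of_ge (by nlinarith),
      show 2 * (1 - (1 - (t - 1) ^ 2 / 2)) = (1 - t) ^ 2 by ring, Real.sqrt_sq (by linarith)]
    ring

lemma abs_Sinv_lt_one {y : ℝ} (hy : y ∈ Ioo 0 1) : |Sinv y| < 1 := by
  have h := Sfun_Sinv hy.1.le hy.2.le
  refine abs_lt.2 ⟨lt_of_not_ge fun h' => ?_, lt_of_not_ge fun h' => ?_⟩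
  · linarith [hy.1, Sfun_of_le_neg_one h']
  · linarith [hy.2, Sfun_of_one_le h']

lemma hasDerivAt_Sinv {y : ℝ} (hy : y ∈ Ioo 0 1) :
    HasDerivAt Sinv (max (1 - |Sinv y|) 0)⁻¹ y :=
  (hasDerivAt_Sfun (Sinv y)).of_local_left_inverse continuous_Sinv.continuousAt
    (by linarith [abs_Sinv_lt_one hy, le_max_left (1 - |Sinv y|) 0])
    (eventually_of_mem (Ioo_mem_nhds hy.1 hy.2) fun z hz => Sfun_Sinv hz.1.le hz.2.le)

lemma contDiffOn_Sinv : ContDiffOn ℝ 1 Sinv (Ioo 0 1) := by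
  rw [show (1 : WithTop ℕ∞) = 0 + 1 from rfl, contDiffOn_succ_iff_deriv_of_isOpen isOpen_Ioo]
  refine ⟨fun y hy => (hasDerivAt_Sinv hy).differentiableAt.differentiableWithinAt, by simp, ?_⟩
  refine contDiffOn_zero.2 (ContinuousOn.congr ?_ fun y hy => (hasDerivAt_Sinv hy).deriv)
  refine ContinuousOn.inv₀ (Continuous.continuousOn ?_) fun y hy => ?_
  · exact (continuous_const.sub continuous_Sinv.abs).max continuous_const
  · linarith [abs_Sinv_lt_one hy, le_max_left (1 - |Sinv y|) 0]

lemma opDiffeo_of_surjective {h : ℝ → ℝ} (hC : ContDiff ℝ 1 h) (hd : ∀ t, 0 < deriv h t)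
    (hs : Surjective h) : OPDiffeo h := by
  have hmono : StrictMono h := strictMono_of_deriv_pos hd
  let e : ℝ ≃o ℝ := hmono.orderIsoOfSurjective h hs
  have hinv (y : ℝ) : HasDerivAt e.symm (deriv h (e.symm y))⁻¹ y :=
    ((hC.differentiable one_ne_zero _).hasDerivAt).of_local_left_inverse
      e.symm.continuous.continuousAt (hd _).ne' (Eventually.of_forall e.apply_symm_apply)
  have hinvC : ContDiff ℝ 1 e.symm := by
    refine contDiff_one_iff_deriv.2 ⟨fun y => (hinv y).differentiableAt, ?_⟩
    rw [show deriv e.symm = _ from funext fun y => (hinv y).deriv]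
    exact ((hC.continuous_deriv le_rfl).comp e.symm.continuous).inv₀ fun y => (hd _).ne'
  exact ⟨hC, ⟨hmono.injective, hs⟩,
    ⟨e.symm, hinvC, e.symm_apply_apply, e.apply_symm_apply⟩, hd⟩

lemma opDiffeo_div_const {r : ℝ} (hr : 0 < r) : OPDiffeo fun t => t / r := by
  refine opDiffeo_of_surjective (contDiff_id.div_const r) (fun t => ?_)
    fun y => ⟨y * r, by field_simp⟩
  rw [((hasDerivAt_id' t).div_const r).deriv]
  positivity

lemma AS1.add {φ ψ : ℝ → ℝ} (hφ : AS1 φ) (hψ : AS1 ψ) : AS1 fun t => φ t + ψ t := by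
  obtain ⟨hφC, a, b, hab, hφa, hφb⟩ := hφ
  obtain ⟨hψC, a', b', hab', hψa, hψb⟩ := hψ
  refine ⟨hφC.add hψC, min a a', max b b',
    (min_le_left _ _).trans (hab.trans (le_max_left _ _)), fun t ht => ?_, fun t ht => ?_⟩
  · dsimp only
    rw [hφa t (ht.trans (min_le_left _ _)), hψa t (ht.trans (min_le_right _ _)), add_zero]
  · have hb : b ≤ t := (le_max_left _ _).trans ht
    have hb' : b' ≤ t := (le_max_right _ _).trans ht
    dsimp only
    rw [hφb t hb, hψb t hb', hφb _ (le_max_left _ _), hψb _ (le_max_right _ _)]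

lemma AS1.const_mul {φ : ℝ → ℝ} (c : ℝ) (hφ : AS1 φ) : AS1 fun t => c * φ t := by
  obtain ⟨hC, a, b, hab, ha, hb⟩ := hφ
  exact ⟨contDiff_const.mul hC, a, b, hab, fun t ht => by simp only [ha t ht, mul_zero],
    fun t ht => by simp only [hb t ht]⟩

lemma AS1.sub {φ ψ : ℝ → ℝ} (hφ : AS1 φ) (hψ : AS1 ψ) : AS1 fun t => φ t - ψ t := by
  simpa [sub_eq_add_neg] using hφ.add (hψ.const_mul (-1))

lemma AS1.comp_opDiffeo {φ h : ℝ → ℝ} (hφ : AS1 φ) (hh : OPDiffeo h) : AS1 (φ ∘ h) := by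
  obtain ⟨hφC, a, b, hab, ha, hb⟩ := hφ
  obtain ⟨hC, -, ⟨g, -, -, hgh⟩, hd⟩ := hh
  have hmono : StrictMono h := strictMono_of_deriv_pos hd
  have hle {s t : ℝ} : s ≤ g t ↔ h s ≤ t := by rw [← hmono.le_iff_le, hgh t]
  have hge {s t : ℝ} : g t ≤ s ↔ t ≤ h s := by rw [← hmono.le_iff_le, hgh t]
  refine ⟨hφC.comp hC, g a, g b, hle.2 ((hgh a).trans_le hab), fun t ht => ha _ (hle.1 ht),
    fun t ht => ?_⟩
  simp only [comp_apply, hgh b, hb _ (hge.1 ht)]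

lemma AS1_Sfun : AS1 Sfun :=
  ⟨contDiff_Sfun, -1, 1, by norm_num, fun _ ht => Sfun_of_le_neg_one ht,
    fun _ ht => by rw [Sfun_of_one_le ht, Sfun_of_one_le le_rfl]⟩

namespace IsRPINorm

variable {N : (ℝ → ℝ) → ℝ} {φ ψ : ℝ → ℝ}

lemma sub_le (hN : IsRPINorm N) (hφ : AS1 φ) (hψ : AS1 ψ) :
    N (fun t => φ t - ψ t) ≤ N φ + N ψ := by
  have h := hN.triangle _ _ hφ (hψ.const_mul (-1))
  rwa [hN.smul _ _ hψ, abs_neg, abs_one, one_mul, show (fun t => φ t + -1 * ψ t) =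
    fun t => φ t - ψ t from funext fun t => by ring] at h

lemma abs_sub_le (hN : IsRPINorm N) (hφ : AS1 φ) (hψ : AS1 ψ) :
    |N φ - N ψ| ≤ N (fun t => φ t - ψ t) := by
  have h₁ := hN.triangle _ _ (hφ.sub hψ) hψ
  have h₂ := hN.sub_le hφ (hφ.sub hψ)
  simp only [sub_add_cancel, sub_sub_cancel] at h₁ h₂
  exact abs_sub_le_iff.2 ⟨by linarith, by linarith⟩

lemma mul_Sfun_comp (hN : IsRPINorm N) (c : ℝ) {h : ℝ → ℝ} (hh : OPDiffeo h) :
    N (fun t => c * Sfun (h t)) = |c| * N Sfun := by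
  rw [← hN.invariant _ _ AS1_Sfun hh]
  exact hN.smul c _ (AS1_Sfun.comp_opDiffeo hh)

end IsRPINorm

/-- On `[-r, r]` the function `y` rises strictly from `0` to `1`; left of `m₀` and right of `m₁`
it has the quadratic ends of `Sfun`, which makes `Sinv ∘ y` affine there, so that it extends to
the diffeomorphism `sfunReparam y r k` with `Sfun ∘ sfunReparam y r k = y`. -/
structure IsSfunProfile (y : ℝ → ℝ) (r k m₀ m₁ : ℝ) : Prop where
  r_pos : 0 < r
  k_pos : 0 < k
  k_le_one : k ≤ 1
  left_gt : -r < m₀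
  left_nonpos : m₀ ≤ 0
  right_nonneg : 0 ≤ m₁
  right_lt : m₁ < r
  contDiff : ContDiff ℝ 1 y
  deriv_pos : ∀ t ∈ Ioo (-r) r, 0 < deriv y t
  eq_left : ∀ t ≤ m₀, y t = k ^ 2 * Sfun (t / r)
  eq_right : ∀ t, m₁ ≤ t → y t = 1 - k ^ 2 * (1 - Sfun (t / r))

def sfunReparam (y : ℝ → ℝ) (r k t : ℝ) : ℝ :=
  if t ≤ -r then k * (t / r + 1) - 1 else if t < r then Sinv (y t) else k * (t / r - 1) + 1

lemma sfunReparam_of_mem_Ioo {y : ℝ → ℝ} {r k t : ℝ} (ht : t ∈ Ioo (-r) r) :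
    sfunReparam y r k t = Sinv (y t) := by
  simp [sfunReparam, not_le.2 ht.1, ht.2]

namespace IsSfunProfile

variable {y : ℝ → ℝ} {r k m₀ m₁ t : ℝ}

lemma eq_Sfun_left (H : IsSfunProfile y r k m₀ m₁) (ht : t ≤ m₀) :
    y t = Sfun (k * (t / r + 1) - 1) := by
  rw [H.eq_left t ht, Sfun_scale_left H.k_pos.le H.k_le_one
    (div_nonpos_of_nonpos_of_nonneg (ht.trans H.left_nonpos) H.r_pos.le)]

lemma eq_Sfun_right (H : IsSfunProfile y r k m₀ m₁) (ht : m₁ ≤ t) :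
    y t = Sfun (k * (t / r - 1) + 1) := by
  rw [H.eq_right t ht, Sfun_scale_right H.k_pos.le H.k_le_one
    (div_nonneg (H.right_nonneg.trans ht) H.r_pos.le)]

lemma apply_mem_Ioo (H : IsSfunProfile y r k m₀ m₁) (ht : t ∈ Ioo (-r) r) :
    y t ∈ Ioo 0 1 := by
  have hr := H.r_pos
  have hmono : StrictMonoOn y (Icc (-r) r) :=
    strictMonoOn_of_deriv_pos (convex_Icc _ _) H.contDiff.continuous.continuousOn
      (by simpa using H.deriv_pos)
  have h0 : y (-r) = 0 := by
    rw [H.eq_left _ H.left_gt.le, neg_div_self hr.ne', Sfun_of_le_neg_one le_rfl, mul_zero]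
  have h1 : y r = 1 := by
    rw [H.eq_right _ H.right_lt.le, div_self hr.ne', Sfun_of_one_le le_rfl]
    ring
  constructor
  · rw [← h0]
    exact hmono ⟨le_rfl, by linarith⟩ (Ioo_subset_Icc_self ht) ht.1
  · rw [← h1]
    exact hmono (Ioo_subset_Icc_self ht) ⟨by linarith, le_rfl⟩ ht.2

lemma lt_or_mem_Ioo_or_lt (H : IsSfunProfile y r k m₀ m₁) (t : ℝ) :
    t < m₀ ∨ t ∈ Ioo (-r) r ∨ m₁ < t := by
  by_cases h₀ : t < m₀
  · exact Or.inl h₀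
  by_cases h₁ : m₁ < t
  · exact Or.inr (Or.inr h₁)
  exact Or.inr (Or.inl ⟨by linarith [H.left_gt], by linarith [H.right_lt]⟩)

lemma sfunReparam_of_lt (H : IsSfunProfile y r k m₀ m₁) (ht : t < m₀) :
    sfunReparam y r k t = k * (t / r + 1) - 1 := by
  have hr := H.r_pos
  unfold sfunReparam
  split_ifs with h₁ h₂
  · rfl
  · have hu₁ : -1 < t / r := by rw [lt_div_iff₀ hr]; linarith
    have hu₀ : t / r ≤ 0 := div_nonpos_of_nonpos_of_nonneg (by linarith [H.left_nonpos]) hr.le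
    have := H.k_pos
    have := H.k_le_one
    rw [H.eq_Sfun_left ht.le, Sinv_Sfun (by nlinarith) (by nlinarith)]
  · linarith [H.left_nonpos, H.right_nonneg, H.right_lt]

lemma sfunReparam_of_gt (H : IsSfunProfile y r k m₀ m₁) (ht : m₁ < t) :
    sfunReparam y r k t = k * (t / r - 1) + 1 := by
  have hr := H.r_pos
  unfold sfunReparam
  split_ifs with h₁ h₂
  · linarith [H.left_gt, H.right_nonneg]
  · have hu₁ : t / r < 1 := by rw [div_lt_iff₀ hr]; linarith
    have hu₀ : 0 ≤ t / r := div_nonneg (by linarith [H.right_nonneg]) hr.le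
    have := H.k_pos
    have := H.k_le_one
    rw [H.eq_Sfun_right ht.le, Sinv_Sfun (by nlinarith) (by nlinarith)]
  · rfl

lemma Sfun_sfunReparam (H : IsSfunProfile y r k m₀ m₁) (t : ℝ) :
    Sfun (sfunReparam y r k t) = y t := by
  rcases H.lt_or_mem_Ioo_or_lt t with ht | ht | ht
  · rw [H.sfunReparam_of_lt ht, H.eq_Sfun_left ht.le]
  · rw [sfunReparam_of_mem_Ioo ht]
    exact Sfun_Sinv (H.apply_mem_Ioo ht).1.le (H.apply_mem_Ioo ht).2.le
  · rw [H.sfunReparam_of_gt ht, H.eq_Sfun_right ht.le]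

lemma contDiffAt_sfunReparam_and_deriv_pos (H : IsSfunProfile y r k m₀ m₁) (t : ℝ) :
    ContDiffAt ℝ 1 (sfunReparam y r k) t ∧ 0 < deriv (sfunReparam y r k) t := by
  have hkr : 0 < k / r := div_pos H.k_pos H.r_pos
  rcases H.lt_or_mem_Ioo_or_lt t with ht | ht | ht
  · have he : sfunReparam y r k =ᶠ[𝓝 t] fun s => k * (s / r + 1) - 1 :=
      eventuallyEq_of_mem (Iio_mem_nhds ht) fun s hs => H.sfunReparam_of_lt hs
    have hd := ((((hasDerivAt_id' t).div_const r).add_const 1).const_mul k).sub_const 1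
    refine ⟨ContDiffAt.congr_of_eventuallyEq (by fun_prop) he, ?_⟩
    rw [he.deriv_eq, hd.deriv]
    simpa [div_eq_mul_inv] using hkr
  · have hy := H.apply_mem_Ioo ht
    have he : sfunReparam y r k =ᶠ[𝓝 t] Sinv ∘ y :=
      eventuallyEq_of_mem (Ioo_mem_nhds ht.1 ht.2) fun s hs => sfunReparam_of_mem_Ioo hs
    have hd := (hasDerivAt_Sinv hy).comp t (H.contDiff.differentiable one_ne_zero t).hasDerivAt
    refine ⟨((contDiffOn_Sinv.contDiffAt (Ioo_mem_nhds hy.1 hy.2)).comp t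
      H.contDiff.contDiffAt).congr_of_eventuallyEq he, ?_⟩
    rw [he.deriv_eq, hd.deriv]
    exact mul_pos (inv_pos.2 (lt_max_of_lt_left (by linarith [abs_Sinv_lt_one hy])))
      (H.deriv_pos t ht)
  · have he : sfunReparam y r k =ᶠ[𝓝 t] fun s => k * (s / r - 1) + 1 :=
      eventuallyEq_of_mem (Ioi_mem_nhds ht) fun s hs => H.sfunReparam_of_gt hs
    have hd := ((((hasDerivAt_id' t).div_const r).sub_const 1).const_mul k).add_const 1
    refine ⟨ContDiffAt.congr_of_eventuallyEq (by fun_prop) he, ?_⟩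
    rw [he.deriv_eq, hd.deriv]
    simpa [div_eq_mul_inv] using hkr

lemma opDiffeo_sfunReparam (H : IsSfunProfile y r k m₀ m₁) : OPDiffeo (sfunReparam y r k) := by
  have hC : ContDiff ℝ 1 (sfunReparam y r k) :=
    contDiff_iff_contDiffAt.2 fun t => (H.contDiffAt_sfunReparam_and_deriv_pos t).1
  have hTop : Tendsto (sfunReparam y r k) atTop atTop := by
    refine Tendsto.congr' (eventuallyEq_of_mem (Ioi_mem_atTop m₁) fun t ht =>
      (H.sfunReparam_of_gt ht).symm) ?_
    exact tendsto_atTop_add_const_right _ 1 ((tendsto_atTop_add_const_right _ (-1)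
      (tendsto_id.atTop_div_const H.r_pos)).const_mul_atTop H.k_pos)
  have hBot : Tendsto (sfunReparam y r k) atBot atBot := by
    refine Tendsto.congr' (eventuallyEq_of_mem (Iio_mem_atBot m₀) fun t ht =>
      (H.sfunReparam_of_lt ht).symm) ?_
    exact tendsto_atBot_add_const_right _ (-1) ((tendsto_atBot_add_const_right _ 1
      (tendsto_id.atBot_div_const H.r_pos)).const_mul_atBot H.k_pos)
  exact opDiffeo_of_surjective hC (fun t => (H.contDiffAt_sfunReparam_and_deriv_pos t).2)
    (hC.continuous.surjective hTop hBot)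

end IsSfunProfile

lemma Monotone.nonneg_of_eq_zero_of_eq {ψ : ℝ → ℝ} {a b c : ℝ} (hmono : Monotone ψ)
    (ha : ∀ t ≤ a, ψ t = 0) (hb : ∀ t, b ≤ t → ψ t = c) : 0 ≤ c := by
  rw [← hb _ (le_max_right a b), ← ha _ (min_le_left a b)]
  exact hmono min_le_max

lemma deriv_add_mul_Sfun_div_pos {ψ : ℝ → ℝ} {δ r t : ℝ} (hψ : Differentiable ℝ ψ)
    (hmono : Monotone ψ) (hδ : 0 < δ) (hr : 0 < r) (ht : t ∈ Ioo (-r) r) :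
    0 < deriv (fun t => ψ t + δ * Sfun (t / r)) t := by
  have hSr := (hasDerivAt_Sfun (t / r)).comp t ((hasDerivAt_id' t).div_const r)
  have hd : HasDerivAt (fun t => ψ t + δ * Sfun (t / r)) _ t :=
    (hψ t).hasDerivAt.add (hSr.const_mul δ)
  have hS : 0 < max (1 - |t / r|) 0 := by
    refine lt_max_of_lt_left (sub_pos.2 ?_)
    rw [abs_div, abs_of_pos hr, div_lt_one hr, abs_lt]
    exact ht
  rw [hd.deriv]
  have := hmono.deriv_nonneg (x := t)
  positivity

lemma exists_opDiffeo_mul_Sfun_eq {ψ : ℝ → ℝ} {a b c δ : ℝ} (hψ : ContDiff ℝ 1 ψ)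
    (hmono : Monotone ψ) (ha : ∀ t ≤ a, ψ t = 0) (hb : ∀ t, b ≤ t → ψ t = c)
    (hδ : 0 < δ) :
    ∃ h r, OPDiffeo h ∧ 0 < r ∧ ∀ t, (c + δ) * Sfun (h t) = ψ t + δ * Sfun (t / r) := by
  have hc : 0 ≤ c := hmono.nonneg_of_eq_zero_of_eq ha hb
  have hcδ : 0 < c + δ := by linarith
  set r := |a| + |b| + 1
  have hr : 0 < r := by positivity
  set k := √(δ / (c + δ))
  have hk : k ^ 2 = δ / (c + δ) := Real.sq_sqrt (div_pos hδ hcδ).le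
  set y := fun t => (ψ t + δ * Sfun (t / r)) / (c + δ) with hy
  have H : IsSfunProfile y r k (min a 0) (max b 0) := by
    refine ⟨hr, Real.sqrt_pos.2 (div_pos hδ hcδ),
      Real.sqrt_le_one.2 ((div_le_one hcδ).2 (by linarith)),
      lt_min (by linarith [neg_abs_le a, abs_nonneg b]) (by linarith), min_le_right _ _,
      le_max_right _ _, max_lt (by linarith [le_abs_self b, abs_nonneg a]) hr,
      (hψ.add (contDiff_const.mul (contDiff_Sfun.comp (contDiff_id.div_const r)))).div_const _,
      fun t ht => ?_, fun t ht => ?_, fun t ht => ?_⟩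
    · rw [hy, deriv_div_const]
      exact div_pos (deriv_add_mul_Sfun_div_pos (hψ.differentiable one_ne_zero) hmono hδ hr ht)
        hcδ
    · simp only [hy, hk, ha t (ht.trans (min_le_left _ _))]
      ring
    · simp only [hy, hk, hb t ((le_max_left _ _).trans ht)]
      field_simp
      ring
  refine ⟨sfunReparam y r k, r, H.opDiffeo_sfunReparam, hr, fun t => ?_⟩
  rw [H.Sfun_sfunReparam]
  simp only [hy]
  field_simp

lemma IsRPINorm.apply_eq_of_monotone {N : (ℝ → ℝ) → ℝ} {ψ : ℝ → ℝ} {b c : ℝ}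
    (hN : IsRPINorm N) (hψ : AS1 ψ) (hmono : Monotone ψ) (hc : ∀ t, b ≤ t → ψ t = c) :
    N ψ = c * N Sfun := by
  obtain ⟨a, -, -, ha, -⟩ := hψ.2
  have hc₀ : 0 ≤ c := hmono.nonneg_of_eq_zero_of_eq ha hc
  have hNS : 0 ≤ N Sfun := hN.nonneg _ AS1_Sfun
  have hbound : ∀ δ > 0, c * N Sfun ≤ N ψ ∧ N ψ ≤ (c + 2 * δ) * N Sfun := by
    intro δ hδ
    obtain ⟨h, r, hh, hr, hψh⟩ := exists_opDiffeo_mul_Sfun_eq hψ.1 hmono ha hc hδ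
    have hSh := hN.mul_Sfun_comp (c + δ) hh
    have hSr := hN.mul_Sfun_comp δ (opDiffeo_div_const hr)
    rw [abs_of_pos (by linarith)] at hSh
    rw [abs_of_pos hδ] at hSr
    have hASh : AS1 fun t => (c + δ) * Sfun (h t) := (AS1_Sfun.comp_opDiffeo hh).const_mul _
    have hAS : AS1 fun t => δ * Sfun (t / r) :=
      (AS1_Sfun.comp_opDiffeo (opDiffeo_div_const hr)).const_mul δ
    have hψeq : (fun t => (c + δ) * Sfun (h t) - δ * Sfun (t / r)) = ψ :=
      funext fun t => by rw [hψh]; ring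
    constructor
    · have h₁ := hN.triangle _ _ hψ hAS
      rw [← funext hψh, hSh, hSr] at h₁
      linarith
    · have h₂ := hN.sub_le hASh hAS
      rw [hψeq, hSh, hSr] at h₂
      linarith
  refine le_antisymm ?_ (hbound 1 one_pos).1
  have hlim : Tendsto (fun δ => (c + 2 * δ) * N Sfun) (𝓝[>] 0) (𝓝 (c * N Sfun)) := by
    have : Continuous fun δ => (c + 2 * δ) * N Sfun := by fun_prop
    simpa using (this.tendsto 0).mono_left nhdsWithin_le_nhds
  exact ge_of_tendsto hlim (eventually_nhdsWithin_of_forall fun δ hδ => (hbound δ hδ).2)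

section Primitive

variable {g : ℝ → ℝ} {a b : ℝ}

lemma intervalIntegral_eq_zero_of_le (ha : ∀ x ≤ a, g x = 0) {t : ℝ} (ht : t ≤ a) :
    ∫ x in a..t, g x = 0 := by
  rw [intervalIntegral.integral_congr (g := fun _ => 0) fun x hx => ha x ?_,
    intervalIntegral.integral_zero]
  rw [uIcc_of_ge ht] at hx
  exact hx.2

lemma intervalIntegral_eq_of_ge (hg : Continuous g) (hb : ∀ x, b ≤ x → g x = 0) {t : ℝ}
    (ht : b ≤ t) : ∫ x in a..t, g x = ∫ x in a..b, g x := by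
  have h₀ : ∫ x in b..t, g x = 0 := by
    rw [intervalIntegral.integral_congr (g := fun _ => 0) fun x hx => hb x ?_,
      intervalIntegral.integral_zero]
    rw [uIcc_of_le ht] at hx
    exact hx.1
  rw [← intervalIntegral.integral_add_adjacent_intervals (hg.intervalIntegrable a b)
    (hg.intervalIntegrable b t), h₀, add_zero]

lemma AS1_integral (hg : Continuous g) (ha : ∀ x ≤ a, g x = 0) (hb : ∀ x, b ≤ x → g x = 0)
    (hab : a ≤ b) : AS1 fun t => ∫ x in a..t, g x := by
  refine ⟨contDiff_one_iff_deriv.2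
      ⟨fun t => (hg.integral_hasStrictDerivAt a t).hasDerivAt.differentiableAt, ?_⟩,
    a, b, hab, fun t ht => intervalIntegral_eq_zero_of_le ha ht,
    fun t ht => intervalIntegral_eq_of_ge hg hb ht⟩
  rw [show deriv (fun t => ∫ x in a..t, g x) = g from funext (hg.deriv_integral g a)]
  exact hg

lemma monotone_integral (hg : Continuous g) (hg₀ : ∀ x, 0 ≤ g x) :
    Monotone fun t => ∫ x in a..t, g x :=
  monotone_of_deriv_nonneg
    (fun t => (hg.integral_hasStrictDerivAt a t).hasDerivAt.differentiableAt)
    fun t => (hg.deriv_integral g a t).symm ▸ hg₀ t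

end Primitive

lemma deriv_eq_zero_of_forall_le {φ : ℝ → ℝ} {a c x : ℝ} (h : ∀ t ≤ a, φ t = c)
    (hx : x < a) : deriv φ x = 0 :=
  (eventuallyEq_of_mem (Iio_mem_nhds hx) fun t ht => h t (le_of_lt ht)).deriv_eq.trans
    (deriv_const x c)

lemma deriv_eq_zero_of_forall_ge {φ : ℝ → ℝ} {b c x : ℝ} (h : ∀ t, b ≤ t → φ t = c)
    (hx : b < x) : deriv φ x = 0 :=
  (eventuallyEq_of_mem (Ioi_mem_nhds hx) fun t ht => h t (le_of_lt ht)).deriv_eq.trans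
    (deriv_const x c)

lemma AS1.exists_monotone_sub {φ : ℝ → ℝ} (hφ : AS1 φ) :
    ∃ (P Q : ℝ → ℝ) (b p q : ℝ), AS1 P ∧ AS1 Q ∧ Monotone P ∧ Monotone Q ∧
      (∀ t, b ≤ t → P t = p ∧ Q t = q) ∧ φ = (fun t => P t - Q t) ∧
      totalVar φ = p + q := by
  obtain ⟨hC, a, b, hab, ha, hb⟩ := hφ
  set g := deriv φ
  have hg : Continuous g := hC.continuous_deriv le_rfl
  have hga (x : ℝ) (hx : x ≤ a - 1) : g x = 0 := deriv_eq_zero_of_forall_le ha (by linarith)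
  have hgb (x : ℝ) (hx : b + 1 ≤ x) : g x = 0 := deriv_eq_zero_of_forall_ge hb (by linarith)
  have hpart {f : ℝ → ℝ} (hf : Continuous f) (hf₀ : f 0 = 0) :
      AS1 fun t => ∫ x in (a - 1)..t, f (g x) :=
    AS1_integral (b := b + 1) (hf.comp hg) (fun x hx => by simp [hga x hx, hf₀])
      (fun x hx => by simp [hgb x hx, hf₀]) (by linarith)
  refine ⟨fun t => ∫ x in (a - 1)..t, (g x)⁺, fun t => ∫ x in (a - 1)..t, (g x)⁻,
    b + 1, _, _,
    hpart continuous_posPart posPart_zero, hpart continuous_negPart negPart_zero,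
    monotone_integral (by fun_prop) fun x => posPart_nonneg _,
    monotone_integral (by fun_prop) fun x => negPart_nonneg _,
    fun t ht => ⟨intervalIntegral_eq_of_ge (by fun_prop) (fun x hx => by simp [hgb x hx]) ht,
      intervalIntegral_eq_of_ge (by fun_prop) (fun x hx => by simp [hgb x hx]) ht⟩,
    funext fun t => ?_, ?_⟩
  · rw [← intervalIntegral.integral_sub (Continuous.intervalIntegrable (by fun_prop) _ _)
      (Continuous.intervalIntegrable (by fun_prop) _ _)]
    simp only [posPart_sub_negPart]
    rw [intervalIntegral.integral_deriv_eq_sub (fun x _ => (hC.differentiable one_ne_zero x))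
      (hg.intervalIntegrable _ _), ha (a - 1) (by linarith), sub_zero]
  · have hsupp : support (fun x => |g x|) ⊆ Ioc (a - 1) (b + 1) := fun x hx => by
      by_contra hx'
      rcases not_and_or.1 hx' with h | h
      · exact hx (by simp [hga x (not_lt.1 h)])
      · exact hx (by simp [hgb x (not_le.1 h).le])
    rw [totalVar, ← intervalIntegral.integral_eq_integral_of_support_subset hsupp,
      ← intervalIntegral.integral_add (Continuous.intervalIntegrable (by fun_prop) _ _)
      (Continuous.intervalIntegrable (by fun_prop) _ _)]
    simp only [posPart_add_negPart]

theorem statement1 (N : (ℝ → ℝ) → ℝ) (hN : IsRPINorm N)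
    (φ : ℝ → ℝ) (hφ : AS1 φ) (L : ℝ)
    (hL : Filter.Tendsto φ Filter.atTop (nhds L)) :
    |L| * N Sfun ≤ N φ ∧ N φ ≤ totalVar φ * N Sfun := by
  obtain ⟨P, Q, b, p, q, hP, hQ, hPm, hQm, hPQ, rfl, hV⟩ := hφ.exists_monotone_sub
  have hNP : N P = p * N Sfun := hN.apply_eq_of_monotone hP hPm fun t ht => (hPQ t ht).1
  have hNQ : N Q = q * N Sfun := hN.apply_eq_of_monotone hQ hQm fun t ht => (hPQ t ht).2
  have hLpq : L = p - q := tendsto_nhds_unique hL <| tendsto_const_nhds.congr' <|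
    eventuallyEq_of_mem (Ici_mem_atTop b) fun t ht => by rw [(hPQ t ht).1, (hPQ t ht).2]
  have hNS : 0 ≤ N Sfun := hN.nonneg _ AS1_Sfun
  constructor
  · calc |L| * N Sfun = |N P - N Q| := by
          rw [hLpq, hNP, hNQ, ← sub_mul, abs_mul, abs_of_nonneg hNS]
      _ ≤ _ := hN.abs_sub_le hP hQ
  · calc _ ≤ N P + N Q := hN.sub_le hP hQ
      _ = totalVar (fun t => P t - Q t) * N Sfun := by rw [hNP, hNQ, hV, add_mul]
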